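/- arXiv:2110.12901 — 2 statements merged into one kernel-verified Lean document; each statement's English description precedes it below -/
import Mathlib

section
/- An NC formula φ is Horn-NC if and only if its clausal form is a regular Horn formula: for all NC formulas φ, φ ∈ 𝓡𝓗 ⟺ cl(φ) ∈ 𝓗. -/
/-- Regular non-clausal (NC) formulas over propositional variables `P` and
truth values `T`: positive literals `X^{≥α}`, negative literals `X_{≤α}`,
conjunctions and disjunctions of lists of NC formulas. -/
inductive NC (P T : Type) : Type where
  | pos : P → T → NC P T
  | neg : P → T → NC P T
  | conj : List (NC P T) → NC P T
  | disj : List (NC P T) → NC P T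

namespace NC

variable {P T : Type}

/-- `HasPos φ` : a positive literal occurs in `φ` (φ is "non-negative"). -/
inductive HasPos : NC P T → Prop where
  | pos (x : P) (a : T) : HasPos (pos x a)
  | conj {l : List (NC P T)} {φ : NC P T} : φ ∈ l → HasPos φ → HasPos (conj l)
  | disj {l : List (NC P T)} {φ : NC P T} : φ ∈ l → HasPos φ → HasPos (disj l)

/-- `IsNeg φ` : φ is a negative NC formula (every literal in it is negative). -/
inductive IsNeg : NC P T → Prop where
  | neg (x : P) (a : T) : IsNeg (neg x a)
  | conj {l : List (NC P T)} : (∀ φ ∈ l, IsNeg φ) → IsNeg (conj l)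
  | disj {l : List (NC P T)} : (∀ φ ∈ l, IsNeg φ) → IsNeg (disj l)

/-- `Subf ψ φ` : ψ is a sub-formula of φ. -/
inductive Subf : NC P T → NC P T → Prop where
  | refl (φ : NC P T) : Subf φ φ
  | conj {l : List (NC P T)} {φ ψ : NC P T} : φ ∈ l → Subf ψ φ → Subf ψ (conj l)
  | disj {l : List (NC P T)} {φ ψ : NC P T} : φ ∈ l → Subf ψ φ → Subf ψ (disj l)

/-- At most one member of `l` contains a positive literal. -/
def AtMostOnePos (l : List (NC P T)) : Prop :=
  ∀ i j : Fin l.length, HasPos (l.get i) → HasPos (l.get j) → i = j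

/-- `φ` is Horn-NC: every disjunction occurring in `φ` (including `φ` itself if
it is a disjunction) has at most one disjunct in which a positive literal occurs. -/
def HornNC (φ : NC P T) : Prop :=
  ∀ l : List (NC P T), Subf (disj l) φ → AtMostOnePos l

/-- Well-formedness: every conjunction and disjunction has `k ≥ 1` members. -/
inductive WF : NC P T → Prop where
  | pos (x : P) (a : T) : WF (pos x a)
  | neg (x : P) (a : T) : WF (neg x a)
  | conj {l : List (NC P T)} : l ≠ [] → (∀ φ ∈ l, WF φ) → WF (conj l)
  | disj {l : List (NC P T)} : l ≠ [] → (∀ φ ∈ l, WF φ) → WF (disj l)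

/-- The {0,1}-valued interpretation of an NC formula under `I : P → T`
(`true` = 1, `false` = 0): `I(X^{≥α}) = 1` iff `I(X) ≥ α`,
`I(X_{≤α}) = 1 − I(X^{≥α})`, disjunction = max, conjunction = min. -/
def eval [LinearOrder T] (I : P → T) : NC P T → Bool
  | pos x a => decide (a ≤ I x)
  | neg x a => !decide (a ≤ I x)
  | conj l => l.attach.all (fun ⟨φ, _⟩ => eval I φ)
  | disj l => l.attach.any (fun ⟨φ, _⟩ => eval I φ)
decreasing_by
  all_goals
    have h := List.sizeOf_lt_of_mem ‹_›
    simp only [NC.conj.sizeOf_spec, NC.disj.sizeOf_spec]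
    omega

end NC

/-- Regular literals, as atoms of clausal formulas. -/
inductive Lit (P T : Type) : Type where
  | pos : P → T → Lit P T
  | neg : P → T → Lit P T

namespace Lit

variable {P T : Type}

def isPos : Lit P T → Bool
  | pos _ _ => true
  | neg _ _ => false

def toNC : Lit P T → NC P T
  | pos x a => NC.pos x a
  | neg x a => NC.neg x a

def eval [LinearOrder T] (I : P → T) : Lit P T → Bool
  | pos x a => decide (a ≤ I x)
  | neg x a => !decide (a ≤ I x)

end Lit

/-- All clauses `(∨ C1 … Ck)` with `Ci` a clause of the `i`-th clause list. -/
def clProd {P T : Type} : List (List (List (Lit P T))) → List (List (Lit P T))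
  | [] => [[]]
  | cs :: rest => cs.flatMap (fun c => (clProd rest).map (fun tail => c ++ tail))

/-- The clausal form `cl(φ)` of an NC formula, obtained by exhaustively applying
the ∨/∧ distributivity laws (a clausal formula is a list of clauses; a clause
is a list of regular literals). -/
def NC.cl {P T : Type} : NC P T → List (List (Lit P T))
  | .pos x a => [[Lit.pos x a]]
  | .neg x a => [[Lit.neg x a]]
  | .conj l => (l.attach.map (fun ⟨φ, _⟩ => NC.cl φ)).flatten
  | .disj l => clProd (l.attach.map (fun ⟨φ, _⟩ => NC.cl φ))
decreasing_by
  all_goals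
    have h := List.sizeOf_lt_of_mem ‹_›
    simp only [NC.conj.sizeOf_spec, NC.disj.sizeOf_spec]
    omega

/-- A regular Horn clause: at most one positive literal. -/
def HornClause {P T : Type} (C : List (Lit P T)) : Prop := C.countP Lit.isPos ≤ 1

/-- A regular Horn (clausal) formula: a conjunction of Horn clauses (`𝓗`). -/
def HornClausal {P T : Type} (F : List (List (Lit P T))) : Prop := ∀ C ∈ F, HornClause C

/-- The {0,1}-valued interpretation of a clausal formula. -/
def evalClausal {P T : Type} [LinearOrder T] (I : P → T) (F : List (List (Lit P T))) : Bool :=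
  F.all (fun C => C.any (Lit.eval I))

/-- A clausal formula regarded as an NC formula. -/
def clausalToNC {P T : Type} (F : List (List (Lit P T))) : NC P T :=
  NC.conj (F.map (fun C => NC.disj (C.map Lit.toNC)))

section Aux9

variable {P T : Type}

lemma mem_clProd_cons {F : List (List (Lit P T))} {rest : List (List (List (Lit P T)))}
    {C : List (Lit P T)} :
    C ∈ clProd (F :: rest) ↔ ∃ c ∈ F, ∃ t ∈ clProd rest, C = c ++ t := by
  simp [clProd, eq_comm]

lemma clProd_ne_nil {L : List (List (List (Lit P T)))} (h : ∀ F ∈ L, F ≠ []) :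
    clProd L ≠ [] := by
  induction L with
  | nil => simp [clProd]
  | cons F rest ih =>
    obtain ⟨c, hc⟩ := List.exists_mem_of_ne_nil _ (h F (by simp))
    obtain ⟨t, ht⟩ := List.exists_mem_of_ne_nil _ (ih (fun F hF => h F (by simp [hF])))
    intro hcon
    have : (c ++ t) ∈ clProd (F :: rest) := mem_clProd_cons.2 ⟨c, hc, t, ht, rfl⟩
    simp [hcon] at this

lemma clProd_pick1 {L : List (List (List (Lit P T)))} (h : ∀ F ∈ L, F ≠ [])
    {F0 : List (List (Lit P T))} {C : List (Lit P T)} (hF0 : F0 ∈ L) (hC : C ∈ F0) :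
    ∃ D ∈ clProd L, C.countP Lit.isPos ≤ D.countP Lit.isPos := by
  induction L with
  | nil => simp at hF0
  | cons F rest ih =>
    rcases List.mem_cons.1 hF0 with h0 | h0
    · obtain ⟨t, ht⟩ := List.exists_mem_of_ne_nil _
        (clProd_ne_nil (fun F hF => h F (List.mem_cons_of_mem _ hF)))
      exact ⟨C ++ t, mem_clProd_cons.2 ⟨C, h0 ▸ hC, t, ht, rfl⟩,
        by simp [List.countP_append]⟩
    · obtain ⟨t, ht, hle⟩ := ih (fun F hF => h F (List.mem_cons_of_mem _ hF)) h0
      obtain ⟨c, hc⟩ := List.exists_mem_of_ne_nil _ (h F (by simp))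
      refine ⟨c ++ t, mem_clProd_cons.2 ⟨c, hc, t, ht, rfl⟩, ?_⟩
      simp [List.countP_append]; omega

lemma clProd_pick2 {L : List (List (List (Lit P T)))} (h : ∀ F ∈ L, F ≠ [])
    {i j : ℕ} (hi : i < L.length) (hj : j < L.length) (hij : i ≠ j)
    {Ci Cj : List (Lit P T)} (hCi : Ci ∈ L[i]) (hCj : Cj ∈ L[j]) :
    ∃ D ∈ clProd L, Ci.countP Lit.isPos + Cj.countP Lit.isPos ≤ D.countP Lit.isPos := by
  induction L generalizing i j with
  | nil => simp at hi
  | cons F rest ih =>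
    have hrest : ∀ F ∈ rest, F ≠ [] := fun F hF => h F (List.mem_cons_of_mem _ hF)
    match i, j with
    | 0, 0 => exact absurd rfl hij
    | 0, j+1 =>
      simp only [List.getElem_cons_zero, List.getElem_cons_succ] at hCi hCj
      obtain ⟨t, ht, hle⟩ := clProd_pick1 hrest
        (List.getElem_mem (by simpa using hj)) hCj
      refine ⟨Ci ++ t, mem_clProd_cons.2 ⟨Ci, hCi, t, ht, rfl⟩, ?_⟩
      simp [List.countP_append]; omega
    | i+1, 0 =>
      simp only [List.getElem_cons_zero, List.getElem_cons_succ] at hCi hCj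
      obtain ⟨t, ht, hle⟩ := clProd_pick1 hrest
        (List.getElem_mem (by simpa using hi)) hCi
      refine ⟨Cj ++ t, mem_clProd_cons.2 ⟨Cj, hCj, t, ht, rfl⟩, ?_⟩
      simp [List.countP_append]; omega
    | i+1, j+1 =>
      simp only [List.getElem_cons_succ] at hCi hCj
      obtain ⟨t, ht, hle⟩ := ih hrest (by simpa using hi) (by simpa using hj)
        (by omega) hCi hCj
      obtain ⟨c, hc⟩ := List.exists_mem_of_ne_nil _ (h F (by simp))
      refine ⟨c ++ t, mem_clProd_cons.2 ⟨c, hc, t, ht, rfl⟩, ?_⟩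
      simp [List.countP_append]; omega

lemma clProd_mem_mem {L : List (List (List (Lit P T)))} {C : List (Lit P T)}
    (hC : C ∈ clProd L) {lit : Lit P T} (hl : lit ∈ C) :
    ∃ F ∈ L, ∃ c ∈ F, lit ∈ c := by
  induction L generalizing C with
  | nil =>
    simp [clProd] at hC
    subst hC; simp at hl
  | cons F rest ih =>
    obtain ⟨c, hc, t, ht, rfl⟩ := mem_clProd_cons.1 hC
    rcases List.mem_append.1 hl with h0 | h0
    · exact ⟨F, by simp, c, hc, h0⟩
    · obtain ⟨F', hF', c', hc', hl'⟩ := ih ht h0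
      exact ⟨F', by simp [hF'], c', hc', hl'⟩

def hasP (F : List (List (Lit P T))) : Bool := F.any (fun C => C.any Lit.isPos)

lemma clProd_count_le {L : List (List (List (Lit P T)))}
    (h1 : ∀ F ∈ L, ∀ C ∈ F, C.countP Lit.isPos ≤ 1) :
    ∀ C ∈ clProd L, C.countP Lit.isPos ≤ L.countP hasP := by
  induction L with
  | nil =>
    intro C hC
    simp [clProd] at hC
    simp [hC]
  | cons F rest ih =>
    intro C hC
    obtain ⟨c, hc, t, ht, rfl⟩ := mem_clProd_cons.1 hC
    have hrest := ih (fun F hF => h1 F (List.mem_cons_of_mem _ hF)) t ht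
    rw [List.countP_append, List.countP_cons]
    by_cases hF : hasP F
    · have := h1 F (by simp) c hc
      simp [hF]; omega
    · have hc0 : c.countP Lit.isPos = 0 := by
        rw [List.countP_eq_zero]
        intro lit hlit hpos
        exact hF (by simp [hasP]; exact ⟨c, hc, lit, hlit, hpos⟩)
      simp [hF]; omega

lemma countP_le_one_of_unique {α : Type*} (p : α → Bool) (L : List α)
    (h : ∀ i j : Fin L.length, p (L.get i) → p (L.get j) → i = j) : L.countP p ≤ 1 := by
  induction L with
  | nil => simp
  | cons a l ih =>
    by_cases ha : p a
    · have hz : l.countP p = 0 := by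
        rw [List.countP_eq_zero]
        intro b hb hpb
        obtain ⟨k, hk, hbk⟩ := List.mem_iff_getElem.1 hb
        have := h ⟨0, by simp⟩ ⟨k+1, by simp; omega⟩ (by simpa)
          (by simpa [List.get_eq_getElem, hbk] using hpb)
        simp [Fin.ext_iff] at this
      rw [List.countP_cons]
      simp [ha, hz]
    · have hle := ih (fun i j hi hj => by
        have := h i.succ j.succ (by simpa using hi) (by simpa using hj)
        exact Fin.succ_injective _ this)
      rw [List.countP_cons]
      simp [ha]; omega

lemma mem_cl_conj {l : List (NC P T)} {C : List (Lit P T)} :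
    C ∈ (NC.conj l).cl ↔ ∃ ψ ∈ l, C ∈ ψ.cl := by
  rw [NC.cl]
  simp

lemma cl_disj_eq {l : List (NC P T)} :
    (NC.disj l).cl = clProd (l.attach.map (fun ⟨φ, _⟩ => φ.cl)) := by
  rw [NC.cl]

lemma mem_Lmap {l : List (NC P T)} {F : List (List (Lit P T))} :
    F ∈ (l.attach.map (fun ⟨φ, _⟩ => NC.cl φ)) ↔ ∃ ψ ∈ l, F = ψ.cl := by
  simp [eq_comm]

lemma length_Lmap {l : List (NC P T)} :
    (l.attach.map (fun ⟨φ, _⟩ => NC.cl φ)).length = l.length := by simp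

lemma getElem_Lmap {l : List (NC P T)} {i : ℕ} (hi : i < l.length) :
    (l.attach.map (fun ⟨φ, _⟩ => NC.cl φ))[i]'(by simpa) = (l[i]).cl := by
  simp

end Aux9

section Aux9b

variable {P T : Type}

theorem cl_ne_nil (φ : NC P T) (hwf : NC.WF φ) : φ.cl ≠ [] := by
  match φ, hwf with
  | .pos x a, _ => rw [NC.cl]; simp
  | .neg x a, _ => rw [NC.cl]; simp
  | .conj l, .conj hne hm =>
    obtain ⟨ψ, hmem⟩ := List.exists_mem_of_ne_nil _ hne
    obtain ⟨C, hC⟩ := List.exists_mem_of_ne_nil _ (cl_ne_nil ψ (hm ψ hmem))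
    intro hcon
    have : C ∈ (NC.conj l).cl := mem_cl_conj.2 ⟨ψ, hmem, hC⟩
    simp [hcon] at this
  | .disj l, .disj hne hm =>
    rw [cl_disj_eq]
    apply clProd_ne_nil
    intro F hF
    obtain ⟨ψ, hmem, rfl⟩ := mem_Lmap.1 hF
    exact cl_ne_nil ψ (hm ψ hmem)
termination_by sizeOf φ
decreasing_by
  all_goals
    have h := List.sizeOf_lt_of_mem hmem
    simp only [NC.conj.sizeOf_spec, NC.disj.sizeOf_spec]
    omega

theorem hasPos_of_cl (φ : NC P T) {C : List (Lit P T)} (hC : C ∈ φ.cl)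
    {lit : Lit P T} (hl : lit ∈ C) (hp : lit.isPos) : NC.HasPos φ := by
  match φ with
  | .pos x a => exact NC.HasPos.pos x a
  | .neg x a =>
    rw [NC.cl] at hC
    simp at hC
    subst hC
    simp at hl
    subst hl
    simp [Lit.isPos] at hp
  | .conj l =>
    obtain ⟨ψ, hmem, hC'⟩ := mem_cl_conj.1 hC
    exact NC.HasPos.conj hmem (hasPos_of_cl ψ hC' hl hp)
  | .disj l =>
    rw [cl_disj_eq] at hC
    obtain ⟨F, hF, c, hc, hl'⟩ := clProd_mem_mem hC hl
    obtain ⟨ψ, hmem, rfl⟩ := mem_Lmap.1 hF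
    exact NC.HasPos.disj hmem (hasPos_of_cl ψ hc hl' hp)
termination_by sizeOf φ
decreasing_by
  all_goals
    have h := List.sizeOf_lt_of_mem hmem
    simp only [NC.conj.sizeOf_spec, NC.disj.sizeOf_spec]
    omega

theorem cl_hasPos (φ : NC P T) (hwf : NC.WF φ) (hp : NC.HasPos φ) :
    ∃ C ∈ φ.cl, 0 < C.countP Lit.isPos := by
  match φ, hwf, hp with
  | .pos x a, _, _ =>
    refine ⟨[Lit.pos x a], by rw [NC.cl]; simp, by simp [Lit.isPos]⟩
  | .conj l, .conj hne hm, .conj hmem hψ =>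
    obtain ⟨C, hC, hpos⟩ := cl_hasPos _ (hm _ hmem) hψ
    exact ⟨C, mem_cl_conj.2 ⟨_, hmem, hC⟩, hpos⟩
  | .disj l, .disj hne hm, .disj hmem hψ =>
    obtain ⟨C, hC, hpos⟩ := cl_hasPos _ (hm _ hmem) hψ
    rw [cl_disj_eq]
    obtain ⟨D, hD, hle⟩ := clProd_pick1 (L := l.attach.map (fun ⟨φ, _⟩ => NC.cl φ))
      (fun F hF => by
        obtain ⟨ψ, hψm, rfl⟩ := mem_Lmap.1 hF
        exact cl_ne_nil ψ (hm ψ hψm))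
      (mem_Lmap.2 ⟨_, hmem, rfl⟩) hC
    exact ⟨D, hD, by omega⟩
termination_by sizeOf φ
decreasing_by
  all_goals
    have h := List.sizeOf_lt_of_mem hmem
    simp only [NC.conj.sizeOf_spec, NC.disj.sizeOf_spec]
    omega

lemma Subf.trans' {χ ψ φ : NC P T} (h2 : NC.Subf ψ φ) : NC.Subf χ ψ → NC.Subf χ φ := by
  induction h2 with
  | refl => exact id
  | conj hm _ ih => exact fun h1 => NC.Subf.conj hm (ih h1)
  | disj hm _ ih => exact fun h1 => NC.Subf.disj hm (ih h1)

lemma WF_of_Subf {ψ φ : NC P T} (hs : NC.Subf ψ φ) (hwf : NC.WF φ) : NC.WF ψ := by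
  induction hs with
  | refl => exact hwf
  | conj hm _ ih => cases hwf with | conj hne h => exact ih (h _ hm)
  | disj hm _ ih => cases hwf with | disj hne h => exact ih (h _ hm)

lemma hornNC_of_Subf {ψ φ : NC P T} (hs : NC.Subf ψ φ) (hh : NC.HornNC φ) :
    NC.HornNC ψ := fun l hl => hh l (Subf.trans' hs hl)

theorem cl_subf_le {ψ φ : NC P T} (hs : NC.Subf ψ φ) (hwf : NC.WF φ) :
    ∀ C ∈ ψ.cl, ∃ D ∈ φ.cl, C.countP Lit.isPos ≤ D.countP Lit.isPos := by
  induction hs with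
  | refl => exact fun C hC => ⟨C, hC, le_refl _⟩
  | @conj l φ' ψ' hm _ ih =>
    intro C hC
    cases hwf with
    | conj hne h =>
      obtain ⟨D, hD, hle⟩ := ih (h _ hm) C hC
      exact ⟨D, mem_cl_conj.2 ⟨_, hm, hD⟩, hle⟩
  | @disj l φ' ψ' hm _ ih =>
    intro C hC
    cases hwf with
    | disj hne h =>
      obtain ⟨D, hD, hle⟩ := ih (h _ hm) C hC
      obtain ⟨E, hE, hle2⟩ := clProd_pick1 (L := l.attach.map (fun ⟨φ, _⟩ => NC.cl φ))
        (fun F hF => by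
          obtain ⟨χ, hχ, rfl⟩ := mem_Lmap.1 hF
          exact cl_ne_nil χ (h χ hχ))
        (mem_Lmap.2 ⟨_, hm, rfl⟩) hD
      exact ⟨E, cl_disj_eq ▸ hE, le_trans hle hle2⟩

end Aux9b

section Aux9c

variable {P T : Type}

theorem hornNC_fwd (φ : NC P T) (hwf : NC.WF φ) (hh : NC.HornNC φ) :
    HornClausal φ.cl := by
  match φ, hwf with
  | .pos x a, _ =>
    intro C hC
    rw [NC.cl] at hC; simp at hC; subst hC
    simp [HornClause, Lit.isPos]
  | .neg x a, _ =>
    intro C hC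
    rw [NC.cl] at hC; simp at hC; subst hC
    simp [HornClause, Lit.isPos]
  | .conj l, .conj hne hm =>
    intro C hC
    obtain ⟨ψ, hmem, hC'⟩ := mem_cl_conj.1 hC
    exact hornNC_fwd ψ (hm ψ hmem)
      (hornNC_of_Subf (NC.Subf.conj hmem (NC.Subf.refl ψ)) hh) C hC'
  | .disj l, .disj hne hm =>
    intro C hC
    rw [cl_disj_eq] at hC
    have h1 : ∀ F ∈ (l.attach.map (fun ⟨φ, _⟩ => NC.cl φ)), ∀ C ∈ F,
        C.countP Lit.isPos ≤ 1 := by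
      intro F hF C hC
      obtain ⟨ψ, hmem, rfl⟩ := mem_Lmap.1 hF
      exact hornNC_fwd ψ (hm ψ hmem)
        (hornNC_of_Subf (NC.Subf.disj hmem (NC.Subf.refl ψ)) hh) C hC
    have h2 := clProd_count_le h1 C hC
    have hamo := hh l (NC.Subf.refl _)
    have h3 : (l.attach.map (fun ⟨φ, _⟩ => NC.cl φ)).countP hasP ≤ 1 := by
      apply countP_le_one_of_unique
      intro i j hi hj
      have hlen : (l.attach.map (fun ⟨φ, _⟩ => NC.cl φ)).length = l.length :=
        length_Lmap
      have hi1 : (i : ℕ) < l.length := hlen ▸ i.isLt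
      have hj1 : (j : ℕ) < l.length := hlen ▸ j.isLt
      have ei : (l.attach.map (fun ⟨φ, _⟩ => NC.cl φ)).get i = (l[(i:ℕ)]).cl := by
        rw [List.get_eq_getElem]; exact getElem_Lmap hi1
      have ej : (l.attach.map (fun ⟨φ, _⟩ => NC.cl φ)).get j = (l[(j:ℕ)]).cl := by
        rw [List.get_eq_getElem]; exact getElem_Lmap hj1
      rw [ei] at hi; rw [ej] at hj
      simp only [hasP, List.any_eq_true] at hi hj
      obtain ⟨Ci, hCi, liti, hliti, hposi⟩ := hi
      obtain ⟨Cj, hCj, litj, hlitj, hposj⟩ := hj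
      have hpi : NC.HasPos (l.get ⟨(i:ℕ), hi1⟩) := by
        rw [List.get_eq_getElem]; exact hasPos_of_cl _ hCi hliti hposi
      have hpj : NC.HasPos (l.get ⟨(j:ℕ), hj1⟩) := by
        rw [List.get_eq_getElem]; exact hasPos_of_cl _ hCj hlitj hposj
      have := hamo ⟨(i:ℕ), hi1⟩ ⟨(j:ℕ), hj1⟩ hpi hpj
      rw [Fin.ext_iff] at this ⊢
      simpa using this
    unfold HornClause
    omega
termination_by sizeOf φ
decreasing_by
  all_goals
    have h := List.sizeOf_lt_of_mem hmem
    simp only [NC.conj.sizeOf_spec, NC.disj.sizeOf_spec]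
    omega

end Aux9c

/-- an NC formula is Horn-NC iff its clausal form is a regular Horn formula. -/
theorem stmt9 {P T : Type} [Countable P] [LinearOrder T]
    (φ : NC P T) (hwf : NC.WF φ) :
    NC.HornNC φ ↔ HornClausal φ.cl := by
  constructor
  · exact hornNC_fwd φ hwf
  · intro hcl l hsub i j hpi hpj
    by_contra hij
    have hwfd : NC.WF (NC.disj l) := WF_of_Subf hsub hwf
    cases hwfd with
    | disj hne hm =>
      have hgi : l.get i = l[(i:ℕ)] := List.get_eq_getElem
      have hgj : l.get j = l[(j:ℕ)] := List.get_eq_getElem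
      have hmi : l.get i ∈ l := by rw [hgi]; exact List.getElem_mem i.isLt
      have hmj : l.get j ∈ l := by rw [hgj]; exact List.getElem_mem j.isLt
      obtain ⟨Ci, hCi, hposi⟩ := cl_hasPos (l.get i) (hm _ hmi) hpi
      obtain ⟨Cj, hCj, hposj⟩ := cl_hasPos (l.get j) (hm _ hmj) hpj
      have hLne : ∀ F ∈ (l.attach.map (fun ⟨φ, _⟩ => NC.cl φ)), F ≠ [] := by
        intro F hF
        obtain ⟨ψ, hmem, rfl⟩ := mem_Lmap.1 hF
        exact cl_ne_nil ψ (hm ψ hmem)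
      have hij' : (i : ℕ) ≠ (j : ℕ) := fun h => hij (Fin.ext h)
      have hlen : (l.attach.map (fun ⟨φ, _⟩ => NC.cl φ)).length = l.length :=
        length_Lmap
      have hCi' : Ci ∈ (l.attach.map (fun ⟨φ, _⟩ => NC.cl φ))[(i:ℕ)]'(by rw [hlen]; exact i.isLt) := by
        rw [getElem_Lmap i.isLt, ← hgi]; exact hCi
      have hCj' : Cj ∈ (l.attach.map (fun ⟨φ, _⟩ => NC.cl φ))[(j:ℕ)]'(by rw [hlen]; exact j.isLt) := by
        rw [getElem_Lmap j.isLt, ← hgj]; exact hCj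
      obtain ⟨D, hD, hle⟩ := clProd_pick2 hLne (by rw [hlen]; exact i.isLt) (by rw [hlen]; exact j.isLt)
        hij' hCi' hCj'
      have hD' : D ∈ (NC.disj l).cl := cl_disj_eq ▸ hD
      obtain ⟨E, hE, hle2⟩ := cl_subf_le hsub hwf D hD'
      have hE1 := hcl E hE
      unfold HornClause at hE1
      omega
end

section
/- Let φ = (∨ φ1 … φk) be an NC disjunction with k ≥ 1 disjuncts. Then cl(φ) is a regular Horn formula if and only if there exists an index i such that cl(φi) is a regular Horn formula and for every j ≠ i the disjunct φj is a negative NC formula. -/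
section Helpers

variable {P T : Type}

lemma cl_conj (l : List (NC P T)) : (NC.conj l).cl = (l.map NC.cl).flatten := by
  rw [NC.cl]; congr 1; simp

lemma cl_disj (l : List (NC P T)) : (NC.disj l).cl = clProd (l.map NC.cl) := by
  rw [NC.cl]; congr 1; simp

lemma mem_clProd {css : List (List (List (Lit P T)))} {C : List (Lit P T)} :
    C ∈ clProd css ↔ ∃ cs, List.Forall₂ (· ∈ ·) cs css ∧ C = cs.flatten := by
  induction css generalizing C with
  | nil =>
    simp only [clProd, List.mem_singleton]
    constructor
    · rintro rfl; exact ⟨[], List.Forall₂.nil, rfl⟩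
    · rintro ⟨cs, hf, rfl⟩; cases hf; rfl
  | cons hd tl ih =>
    simp only [clProd, List.mem_flatMap, List.mem_map]
    constructor
    · rintro ⟨c, hc, tail, htail, rfl⟩
      obtain ⟨cs, hf, rfl⟩ := ih.1 htail
      exact ⟨c :: cs, List.Forall₂.cons hc hf, rfl⟩
    · rintro ⟨cs, hf, rfl⟩
      cases hf with
      | cons hc hf' => exact ⟨_, hc, _, ih.2 ⟨_, hf', rfl⟩, rfl⟩

lemma clProd_exists_mem {css : List (List (List (Lit P T)))}
    (h : ∀ cs ∈ css, cs ≠ []) : ∃ C, C ∈ clProd css := by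
  induction css with
  | nil => exact ⟨[], by simp [clProd]⟩
  | cons hd tl ih =>
    obtain ⟨c, hc⟩ := List.exists_mem_of_ne_nil hd (h hd (by simp))
    obtain ⟨D, hD⟩ := ih (fun cs hcs => h cs (by simp [hcs]))
    refine ⟨c ++ D, ?_⟩
    simp only [clProd, List.mem_flatMap, List.mem_map]
    exact ⟨c, hc, D, hD, rfl⟩

lemma exists_superclause {css : List (List (List (Lit P T)))} (hne : ∀ cs ∈ css, cs ≠ [])
    {F : List (List (Lit P T))} (hF : F ∈ css) {C : List (Lit P T)} (hC : C ∈ F) :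
    ∃ D ∈ clProd css, ∀ L ∈ C, L ∈ D := by
  induction css with
  | nil => cases hF
  | cons hd tl ih =>
    have htl : ∀ cs ∈ tl, cs ≠ [] := fun cs h => hne cs (by simp [h])
    rcases List.mem_cons.1 hF with rfl | hF'
    · obtain ⟨D, hD⟩ := clProd_exists_mem htl
      refine ⟨C ++ D, ?_, fun L hL => by simp [hL]⟩
      simp only [clProd, List.mem_flatMap, List.mem_map]
      exact ⟨C, hC, D, hD, rfl⟩
    · obtain ⟨D, hD, hsub⟩ := ih htl hF'
      obtain ⟨c, hc⟩ := List.exists_mem_of_ne_nil hd (hne hd (by simp))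
      refine ⟨c ++ D, ?_, fun L hL => by simp [hsub L hL]⟩
      simp only [clProd, List.mem_flatMap, List.mem_map]
      exact ⟨c, hc, D, hD, rfl⟩

lemma cl_ne (φ : NC P T) (h : NC.WF φ) : φ.cl ≠ [] := by
  match φ with
  | .pos x a => rw [NC.cl]; simp
  | .neg x a => rw [NC.cl]; simp
  | .conj l =>
    rw [cl_conj]
    have hne : l ≠ [] := by cases h; assumption
    have hwf : ∀ ψ ∈ l, NC.WF ψ := by cases h; assumption
    obtain ⟨ψ, hψ⟩ := List.exists_mem_of_ne_nil _ hne
    obtain ⟨C, hC⟩ := List.exists_mem_of_ne_nil _ (cl_ne ψ (hwf ψ hψ))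
    exact List.ne_nil_of_mem
      (List.mem_flatten.2 ⟨_, List.mem_map_of_mem hψ, hC⟩)
  | .disj l =>
    rw [cl_disj]
    have hwf : ∀ ψ ∈ l, NC.WF ψ := by cases h; assumption
    have hcne : ∀ cs ∈ l.map NC.cl, cs ≠ [] := by
      intro cs hcs
      rw [List.mem_map] at hcs
      obtain ⟨ψ, hψ, rfl⟩ := hcs
      exact cl_ne ψ (hwf ψ hψ)
    obtain ⟨C, hC⟩ := clProd_exists_mem hcne
    exact List.ne_nil_of_mem hC
termination_by sizeOf φ
decreasing_by
  all_goals
    have h := List.sizeOf_lt_of_mem hψ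
    simp only [NC.conj.sizeOf_spec, NC.disj.sizeOf_spec]
    omega

lemma mem_of_forall₂_mem {α : Type} {l1 : List α} {l2 : List (List α)}
    (h : List.Forall₂ (· ∈ ·) l1 l2) {a : α} (ha : a ∈ l1) : ∃ b ∈ l2, a ∈ b := by
  induction h with
  | nil => cases ha
  | cons hr _ ih =>
    rcases List.mem_cons.1 ha with rfl | ha'
    · exact ⟨_, by simp, hr⟩
    · obtain ⟨b, hb, hab⟩ := ih ha'
      exact ⟨b, by simp [hb], hab⟩

lemma isNeg_iff (φ : NC P T) (h : NC.WF φ) :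
    NC.IsNeg φ ↔ ∀ C ∈ φ.cl, ∀ L ∈ C, L.isPos = false := by
  match φ with
  | .pos x a =>
    rw [NC.cl]
    constructor
    · intro h'; cases h'
    · intro h'
      have := h' [Lit.pos x a] (by simp) (Lit.pos x a) (by simp)
      simp [Lit.isPos] at this
  | .neg x a =>
    rw [NC.cl]
    constructor
    · intro _ C hC L hL
      simp only [List.mem_singleton] at hC
      subst hC
      simp only [List.mem_singleton] at hL
      subst hL
      rfl
    · intro _; exact .neg x a
  | .conj l =>
    rw [cl_conj]
    have hwf : ∀ ψ ∈ l, NC.WF ψ := by cases h; assumption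
    constructor
    · intro hn C hC L hL
      have hn' : ∀ ψ ∈ l, NC.IsNeg ψ := by cases hn; assumption
      rw [List.mem_flatten] at hC
      obtain ⟨F, hF, hCF⟩ := hC
      rw [List.mem_map] at hF
      obtain ⟨ψ, hψ, rfl⟩ := hF
      exact ((isNeg_iff ψ (hwf ψ hψ)).1 (hn' ψ hψ)) C hCF L hL
    · intro hall
      exact .conj fun ψ hψ => (isNeg_iff ψ (hwf ψ hψ)).2 (fun C hC L hL =>
        hall C (List.mem_flatten.2 ⟨_, List.mem_map_of_mem hψ, hC⟩) L hL)
  | .disj l =>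
    rw [cl_disj]
    have hwf : ∀ ψ ∈ l, NC.WF ψ := by cases h; assumption
    have hcne : ∀ cs ∈ l.map NC.cl, cs ≠ [] := by
      intro cs hcs
      rw [List.mem_map] at hcs
      obtain ⟨ψ, hψ, rfl⟩ := hcs
      exact cl_ne ψ (hwf ψ hψ)
    constructor
    · intro hn C hC L hL
      have hn' : ∀ ψ ∈ l, NC.IsNeg ψ := by cases hn; assumption
      obtain ⟨cs, hf, rfl⟩ := mem_clProd.1 hC
      rw [List.mem_flatten] at hL
      obtain ⟨c, hc, hLc⟩ := hL
      obtain ⟨F, hF, hcF⟩ := mem_of_forall₂_mem hf hc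
      rw [List.mem_map] at hF
      obtain ⟨ψ, hψ, rfl⟩ := hF
      exact ((isNeg_iff ψ (hwf ψ hψ)).1 (hn' ψ hψ)) c hcF L hLc
    · intro hall
      refine .disj fun ψ hψ => (isNeg_iff ψ (hwf ψ hψ)).2 (fun C hC L hL => ?_)
      obtain ⟨D, hD, hsub⟩ :=
        exists_superclause hcne (List.mem_map_of_mem (f := NC.cl) hψ) hC
      exact hall D hD L (hsub L hL)
termination_by sizeOf φ
decreasing_by
  all_goals
    have h := List.sizeOf_lt_of_mem hψ
    simp only [NC.conj.sizeOf_spec, NC.disj.sizeOf_spec]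
    omega

lemma countP_flatten_ofFn {α : Type} {n : ℕ} (p : α → Bool) (f : Fin n → List α) :
    (List.ofFn f).flatten.countP p = ∑ i, (f i).countP p := by
  rw [List.countP_flatten, List.map_ofFn, List.sum_ofFn]; rfl

lemma forall₂_ofFn_map {α β : Type} {l : List α} (g : α → List β) (f : Fin l.length → β)
    (hf : ∀ i, f i ∈ g (l.get i)) : List.Forall₂ (· ∈ ·) (List.ofFn f) (l.map g) := by
  rw [List.forall₂_iff_get]
  refine ⟨by simp, ?_⟩
  intro i h₁ h₂
  have h₂' : i < l.length := by simpa using h₂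
  have := hf ⟨i, h₂'⟩
  simpa [List.get_ofFn, List.getElem_map] using this

lemma key2 {l : List (NC P T)} (hwf : ∀ φ ∈ l, NC.WF φ) :
    HornClausal (clProd (l.map NC.cl)) ↔
      ∀ f : Fin l.length → List (Lit P T), (∀ i, f i ∈ (l.get i).cl) →
        (∑ i, (f i).countP Lit.isPos) ≤ 1 := by
  constructor
  · intro H f hf
    have hmem : (List.ofFn f).flatten ∈ clProd (l.map NC.cl) :=
      mem_clProd.2 ⟨List.ofFn f, forall₂_ofFn_map NC.cl f hf, rfl⟩
    have := H _ hmem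
    rwa [HornClause, countP_flatten_ofFn] at this
  · intro H C hC
    obtain ⟨cs, hforall, rfl⟩ := mem_clProd.1 hC
    obtain ⟨hlen, hget⟩ := List.forall₂_iff_get.1 hforall
    have hlen' : cs.length = l.length := by simpa using hlen
    set f : Fin l.length → List (Lit P T) := fun i => cs.get ⟨i.1, by omega⟩ with hfdef
    have hf : ∀ i, f i ∈ (l.get i).cl := by
      intro i
      have := hget i.1 (by omega) (by simp [i.2])
      simpa [List.getElem_map, hfdef] using this
    have hcs : cs = List.ofFn f := by
      apply List.ext_get (by simp [hlen'])
      intro n h₁ h₂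
      simp [hfdef, List.get_ofFn]
    rw [HornClause, hcs, countP_flatten_ofFn]
    exact H f hf

end Helpers

/-- for an NC disjunction (∨ φ1 … φk) with k ≥ 1 disjuncts, cl(φ) is a
regular Horn formula iff there is an index i with cl(φi) a regular Horn formula and
every other disjunct a negative NC formula. -/
theorem stmt10 {P T : Type} [Countable P] [LinearOrder T]
    (l : List (NC P T)) (hk : l ≠ []) (hwf : ∀ φ ∈ l, NC.WF φ) :
    HornClausal (NC.disj l).cl ↔
      ∃ i : Fin l.length, HornClausal ((l.get i).cl) ∧
        ∀ j : Fin l.length, j ≠ i → NC.IsNeg (l.get j) := by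
  classical
  have hwfget : ∀ i : Fin l.length, NC.WF (l.get i) :=
    fun i => hwf _ (List.get_mem l i)
  have hclne : ∀ i : Fin l.length, (l.get i).cl ≠ [] :=
    fun i => cl_ne _ (hwfget i)
  have hd : ∀ i : Fin l.length, ∃ C, C ∈ (l.get i).cl :=
    fun i => List.exists_mem_of_ne_nil _ (hclne i)
  choose d hd using hd
  rw [cl_disj, key2 hwf]
  constructor
  · intro K
    by_cases hA : ∀ j : Fin l.length, NC.IsNeg (l.get j)
    · set i0 : Fin l.length := ⟨0, List.length_pos_iff.2 hk⟩ with hi0def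
      refine ⟨i0, ?_, fun j _ => hA j⟩
      intro C hC
      have h0 := (isNeg_iff (l.get i0) (hwfget i0)).1 (hA i0)
      have hz : C.countP Lit.isPos = 0 :=
        List.countP_eq_zero.2 (fun L hL => by simp [h0 C hC L hL])
      simp [HornClause, hz]
    · push_neg at hA
      obtain ⟨i0, hi0⟩ := hA
      have hnot : ¬ ∀ C ∈ (l.get i0).cl, ∀ L ∈ C, L.isPos = false :=
        fun h => hi0 ((isNeg_iff _ (hwfget i0)).2 h)
      push_neg at hnot
      obtain ⟨Cstar, hCstar, Lstar, hLstar, hpos⟩ := hnot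
      have hCpos : 1 ≤ Cstar.countP Lit.isPos := by
        have : 0 < Cstar.countP Lit.isPos :=
          List.countP_pos_iff.2 ⟨Lstar, hLstar, by simpa using hpos⟩
        omega
      have hzero : ∀ j : Fin l.length, j ≠ i0 →
          ∀ C ∈ (l.get j).cl, C.countP Lit.isPos = 0 := by
        intro j hj C hC
        set f : Fin l.length → List (Lit P T) :=
          fun k => if k = i0 then Cstar else if k = j then C else d k with hfdef
        have hf : ∀ k, f k ∈ (l.get k).cl := by
          intro k
          by_cases h1 : k = i0
          · subst h1; simpa [hfdef] using hCstar
          · by_cases h2 : k = j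
            · subst h2; simpa [hfdef, h1] using hC
            · simpa [hfdef, h1, h2] using hd k
        have hs := K f hf
        have hsum : (f i0).countP Lit.isPos + (f j).countP Lit.isPos ≤
            ∑ k, (f k).countP Lit.isPos := by
          have := Finset.sum_le_sum_of_subset
            (f := fun k => (f k).countP Lit.isPos)
            (Finset.subset_univ ({i0, j} : Finset (Fin l.length)))
          rwa [Finset.sum_pair (Ne.symm hj)] at this
        have h1 : f i0 = Cstar := by simp [hfdef]
        have h2 : f j = C := by simp [hfdef, hj]
        rw [h1, h2] at hsum
        omega
      refine ⟨i0, ?_, ?_⟩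
      · intro C hC
        set f : Fin l.length → List (Lit P T) :=
          fun k => if k = i0 then C else d k with hfdef
        have hf : ∀ k, f k ∈ (l.get k).cl := by
          intro k
          by_cases h1 : k = i0
          · subst h1; simpa [hfdef] using hC
          · simpa [hfdef, h1] using hd k
        have hs := K f hf
        have heq : (∑ k, (f k).countP Lit.isPos) = (f i0).countP Lit.isPos := by
          refine Finset.sum_eq_single_of_mem i0 (Finset.mem_univ _) ?_
          intro b _ hb
          have : f b = d b := by simp [hfdef, hb]
          rw [this]
          exact hzero b hb (d b) (hd b)
        have h1 : f i0 = C := by simp [hfdef]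
        rw [heq, h1] at hs
        exact hs
      · intro j hj
        refine (isNeg_iff _ (hwfget j)).2 (fun C hC L hL => ?_)
        have := hzero j hj C hC
        rw [List.countP_eq_zero] at this
        simpa using this L hL
  · rintro ⟨i, hH, hneg⟩ f hf
    have heq : (∑ k, (f k).countP Lit.isPos) = (f i).countP Lit.isPos := by
      refine Finset.sum_eq_single_of_mem i (Finset.mem_univ _) ?_
      intro b _ hb
      have h0 := (isNeg_iff _ (hwfget b)).1 (hneg b hb)
      exact List.countP_eq_zero.2 (fun L hL => by simp [h0 _ (hf b) L hL])
    rw [heq]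
    exact hH _ (hf i)
end
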